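/- Let X be a metric space, let f, g : [0,1] → X be continuous curves, let 0 < ε, and let B > 0 with B ≤ δ_F(f,g). Let 0 = s_0 ≤ s_1 ≤ … ≤ s_p = 1 and 0 = t_0 ≤ t_1 ≤ … ≤ t_q = 1, set u_i = f(s_i) and v_j = g(t_j), and suppose the subdivisions have deviation at most εB/2, i.e. for every i and every s ∈ [s_i, s_{i+1}], dist(f(s), f(s_i)) ≤ εB/2 and dist(f(s), f(s_{i+1})) ≤ εB/2, and likewise for g on each [t_j, t_{j+1}]. Then (1−ε)·δ_F(f,g) ≤ δ_dF(u,v) ≤ (1+ε)·δ_F(f,g). -/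

import Mathlib

open unitInterval

/-- A reparametrization: a continuous nondecreasing surjection of `[0,1]` onto itself. -/
def IsReparam (α : I → I) : Prop :=
  Continuous α ∧ Monotone α ∧ Function.Surjective α

/-- The continuous Fréchet distance between two curves `f, g : [0,1] → X`:
the infimum over all pairs of reparametrizations `(α, β)` of
`sup_{r ∈ [0,1]} dist (f (α r)) (g (β r))`. -/
noncomputable def frechetDist {X : Type*} [MetricSpace X] (f g : I → X) : ℝ :=
  sInf { d | ∃ α β : I → I, IsReparam α ∧ IsReparam β ∧
    d = ⨆ r : I, dist (f (α r)) (g (β r)) }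

/-- `IsCoupling p q m a b`: the index pairs `(a 0, b 0), …, (a m, b m)` form a coupling
between sequences indexed by `0,…,p` and `0,…,q`. -/
def IsCoupling (p q m : ℕ) (a b : ℕ → ℕ) : Prop :=
  a 0 = 0 ∧ b 0 = 0 ∧ a m = p ∧ b m = q ∧
  (∀ l < m, a (l + 1) = a l ∨ a (l + 1) = a l + 1) ∧
  (∀ l < m, b (l + 1) = b l ∨ b (l + 1) = b l + 1)

/-- The discrete Fréchet distance between the finite sequences `u 0, …, u p` and
`v 0, …, v q`, computed with respect to the distance function `d`: the infimum over all
couplings of the maximum of `d` over the coupled pairs. -/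
noncomputable def discreteFrechetWith {X : Type*} (d : X → X → ℝ)
    (p q : ℕ) (u v : ℕ → X) : ℝ :=
  sInf { c | ∃ m : ℕ, ∃ a b : ℕ → ℕ, IsCoupling p q m a b ∧
    c = (Finset.range (m + 1)).sup' Finset.nonempty_range_add_one
      (fun l => d (u (a l)) (v (b l))) }

/-- The discrete Fréchet distance with respect to the metric of `X`. -/
noncomputable def discreteFrechet {X : Type*} [MetricSpace X]
    (p q : ℕ) (u v : ℕ → X) : ℝ :=
  discreteFrechetWith dist p q u v

/-!
The two distances differ by at most `εB ≤ εδ_F(f, g)`, each direction paying the deviation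
`εB/2` once on each curve.

A coupling `(a, b)` of length `m` yields reparametrizations: during the `l`-th of `m` equal time
slots, `α` moves linearly from `s (a l)` to `s (a (l + 1))` and `β` from `t (b l)` to
`t (b (l + 1))`, so at every time `f ∘ α` and `g ∘ β` are within `εB/2` of a coupled pair of
vertices.

Conversely, reparametrizations `(α, β)` yield a coupling: merge the first times `γ (s i)` and
`δ (t j)` at which `α` reaches `s i` and `β` reaches `t j`. The later of the two current times `r`
precedes both next times, so each coupled pair of vertices is within `εB/2` of `f (α r)` and
`g (β r)`.
-/

section

variable {X : Type*} [MetricSpace X]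

theorem IsReparam.of_monotone {α : I → I} (hc : Continuous α) (hm : Monotone α)
    (h0 : α 0 = 0) (h1 : α 1 = 1) : IsReparam α := by
  refine ⟨hc, hm, fun y => ?_⟩
  have hivt := intermediate_value_univ 0 1 hc
  rw [h0, h1] at hivt
  exact hivt ⟨nonneg', le_one'⟩

theorem IsReparam.exists_monotone_section {α : I → I} (hα : IsReparam α) :
    ∃ γ : I → I, Monotone γ ∧ γ 0 = 0 ∧ ∀ y, α (γ y) = y := by
  have hleast : ∀ y, ∃ x, IsLeast (α ⁻¹' {y}) x := fun y =>
    (isClosed_singleton.preimage hα.1).isCompact.exists_isLeast (hα.2.2 y)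
  choose γ hγ using hleast
  have hsec : ∀ y, α (γ y) = y := fun y => (hγ y).1
  refine ⟨γ, fun y y' hyy' => ?_, ?_, hsec⟩
  · by_contra! hlt
    have hy'y : y' ≤ y := by simpa only [hsec] using hα.2.1 hlt.le
    exact hlt.ne (congrArg γ (le_antisymm hy'y hyy'))
  · have h0 : α 0 = 0 :=
      le_antisymm (by simpa only [hsec] using hα.2.1 (show (0 : I) ≤ γ 0 from nonneg')) nonneg'
    exact le_antisymm ((hγ 0).2 h0) nonneg'

theorem frechetDist_le {f g : I → X} {α β : I → I} (hα : IsReparam α) (hβ : IsReparam β)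
    {c : ℝ} (hc : ∀ r, dist (f (α r)) (g (β r)) ≤ c) : frechetDist f g ≤ c := by
  refine le_trans ?_ (ciSup_le hc)
  refine csInf_le ⟨0, ?_⟩ ⟨α, β, hα, hβ, rfl⟩
  rintro _ ⟨_, _, -, -, rfl⟩
  exact Real.iSup_nonneg fun _ => dist_nonneg

theorem le_frechetDist {f g : I → X} {c : ℝ}
    (h : ∀ α β, IsReparam α → IsReparam β → c ≤ ⨆ r, dist (f (α r)) (g (β r))) :
    c ≤ frechetDist f g := by
  have hid : IsReparam id := ⟨continuous_id, monotone_id, Function.surjective_id⟩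
  refine le_csInf ⟨_, id, id, hid, hid, rfl⟩ ?_
  rintro _ ⟨α, β, hα, hβ, rfl⟩
  exact h α β hα hβ

namespace IsCoupling

variable {p q m : ℕ} {a b : ℕ → ℕ}

theorem symm (h : IsCoupling p q m a b) : IsCoupling q p m b a :=
  ⟨h.2.1, h.1, h.2.2.2.1, h.2.2.1, h.2.2.2.2.2, h.2.2.2.2.1⟩

theorem fst_le (h : IsCoupling p q m a b) {l : ℕ} (hl : l ≤ m) : a l ≤ p := by
  refine Nat.decreasingInduction (motive := fun l _ => a l ≤ p) (fun k hk ih => ?_) h.2.2.1.le hl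
  rcases h.2.2.2.2.1 k hk with e | e <;> omega

end IsCoupling

section Merge

variable {β : Type*} [LinearOrder β] (R P : ℕ → β) (p q : ℕ)

/-- The greedy merge of the sorted key sequences `R 0 ≤ … ≤ R p` and `P 0 ≤ … ≤ P q`, as a path
of index pairs. -/
def mergeIndex : ℕ → ℕ × ℕ
  | 0 => (0, 0)
  | l + 1 =>
    let c := mergeIndex l
    if c.1 < p ∧ (q ≤ c.2 ∨ R (c.1 + 1) ≤ P (c.2 + 1)) then (c.1 + 1, c.2) else (c.1, c.2 + 1)

theorem mergeIndex_succ (l : ℕ) :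
    mergeIndex R P p q (l + 1) = ((mergeIndex R P p q l).1 + 1, (mergeIndex R P p q l).2) ∨
      mergeIndex R P p q (l + 1) = ((mergeIndex R P p q l).1, (mergeIndex R P p q l).2 + 1) := by
  rw [mergeIndex]
  split_ifs
  exacts [Or.inl rfl, Or.inr rfl]

variable {R P p q}

theorem mergeIndex_spec (hR : ∀ i < p, R i ≤ R (i + 1)) (hP : ∀ j < q, P j ≤ P (j + 1))
    (h0 : R 0 = P 0) {l : ℕ} (hl : l ≤ p + q) {i j : ℕ} (hij : mergeIndex R P p q l = (i, j)) :
    i + j = l ∧ i ≤ p ∧ j ≤ q ∧ (i < p → P j ≤ R (i + 1)) ∧ (j < q → R i ≤ P (j + 1)) := by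
  induction l generalizing i j with
  | zero =>
    obtain ⟨rfl, rfl⟩ := Prod.mk.inj hij.symm
    exact ⟨rfl, p.zero_le, q.zero_le, fun hp => h0 ▸ hR 0 hp, fun hq => h0 ▸ hP 0 hq⟩
  | succ l ih =>
    obtain ⟨hsum, hip, hjq, hPR, hRP⟩ := ih (by omega) rfl
    rw [mergeIndex] at hij
    split_ifs at hij with hc <;> obtain ⟨rfl, rfl⟩ := Prod.mk.inj hij
    · refine ⟨by omega, hc.1, hjq, fun hi => (hPR hc.1).trans (hR _ hi), fun hj => ?_⟩
      exact hc.2.resolve_left (not_le.2 hj)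
    · have hj : (mergeIndex R P p q l).2 < q := by
        by_contra! hj
        exact hc ⟨by omega, Or.inl hj⟩
      refine ⟨by omega, hip, hj, fun hi => ?_, fun hj' => (hRP hj).trans (hP _ hj')⟩
      exact (not_le.1 fun h => hc ⟨hi, Or.inr h⟩).le

theorem exists_isCoupling_merge (hR : ∀ i < p, R i ≤ R (i + 1)) (hP : ∀ j < q, P j ≤ P (j + 1))
    (h0 : R 0 = P 0) :
    ∃ a b : ℕ → ℕ, IsCoupling p q (p + q) a b ∧ ∀ l ≤ p + q,
      (a l < p → max (R (a l)) (P (b l)) ≤ R (a l + 1)) ∧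
      (b l < q → max (R (a l)) (P (b l)) ≤ P (b l + 1)) := by
  have hspec := fun l (hl : l ≤ p + q) => mergeIndex_spec hR hP h0 hl rfl
  obtain ⟨hsum, hip, hjq, -⟩ := hspec (p + q) le_rfl
  refine ⟨fun l => (mergeIndex R P p q l).1, fun l => (mergeIndex R P p q l).2,
    ⟨rfl, rfl, by beta_reduce; omega, by beta_reduce; omega, fun l _ => ?_, fun l _ => ?_⟩,
    fun l hl => ?_⟩
  · rcases mergeIndex_succ R P p q l with h | h <;> simp [h]
  · rcases mergeIndex_succ R P p q l with h | h <;> simp [h]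
  · obtain ⟨-, -, -, hPR, hRP⟩ := hspec l hl
    exact ⟨fun hi => max_le (hR _ hi) (hPR hi), fun hj => max_le (hRP hj) (hP _ hj)⟩

end Merge

theorem exists_isCoupling (p q : ℕ) : ∃ m a b, IsCoupling p q m a b := by
  obtain ⟨a, b, h, -⟩ := exists_isCoupling_merge (R := fun _ => (0 : ℕ)) (P := fun _ => 0)
    (p := p) (q := q) (fun _ _ => le_rfl) (fun _ _ => le_rfl) rfl
  exact ⟨_, a, b, h⟩

theorem discreteFrechet_le {p q m : ℕ} {a b : ℕ → ℕ} {u v : ℕ → X} (h : IsCoupling p q m a b)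
    {c : ℝ} (hc : ∀ l ≤ m, dist (u (a l)) (v (b l)) ≤ c) : discreteFrechet p q u v ≤ c := by
  refine le_trans ?_ (Finset.sup'_le Finset.nonempty_range_add_one _ fun l hl =>
    hc l (Nat.lt_succ_iff.1 (Finset.mem_range.1 hl)))
  refine csInf_le ⟨0, ?_⟩ ⟨m, a, b, h, rfl⟩
  rintro _ ⟨m', a', b', -, rfl⟩
  exact dist_nonneg.trans
    (Finset.le_sup' (fun l => dist (u (a' l)) (v (b' l))) (Finset.mem_range.2 m'.succ_pos))

theorem le_discreteFrechet {p q : ℕ} {u v : ℕ → X} {c : ℝ}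
    (h : ∀ m a b, IsCoupling p q m a b →
      c ≤ (Finset.range (m + 1)).sup' Finset.nonempty_range_add_one
        fun l => dist (u (a l)) (v (b l))) :
    c ≤ discreteFrechet p q u v := by
  obtain ⟨m, a, b, hab⟩ := exists_isCoupling p q
  refine le_csInf ⟨_, m, a, b, hab, rfl⟩ ?_
  rintro _ ⟨m, a, b, hab, rfl⟩
  exact h m a b hab

structure IsSubdivision (s : ℕ → I) (p : ℕ) : Prop where
  map_zero : s 0 = 0
  map_last : s p = 1
  le_succ : ∀ i < p, s i ≤ s (i + 1)

theorem IsSubdivision.pos {s : ℕ → I} {p : ℕ} (hs : IsSubdivision s p) : 0 < p := by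
  refine Nat.pos_of_ne_zero fun hp => zero_ne_one (α := I) ?_
  rw [← hs.map_zero, ← hs.map_last, hp]

theorem IsCoupling.isSubdivision_comp_fst {p q m : ℕ} {a b : ℕ → ℕ} {s : ℕ → I}
    (h : IsCoupling p q m a b) (hs : IsSubdivision s p) : IsSubdivision (s ∘ a) m where
  map_zero := by simp [h.1, hs.map_zero]
  map_last := by simp [h.2.2.1, hs.map_last]
  le_succ l hl := by
    rcases h.2.2.2.2.1 l hl with e | e
    · simp [e]
    · simpa [e] using hs.le_succ (a l) (by have := h.fst_le (show l + 1 ≤ m from hl); omega)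

/-- The piecewise-linear interpolation of `c 0, …, c m` at the nodes `0, …, m`, constant outside
`[0, m]`. -/
noncomputable def interpolate (c : ℕ → ℝ) (m : ℕ) (x : ℝ) : ℝ :=
  c 0 + ∑ l ∈ Finset.range m, (c (l + 1) - c l) * (Set.projIcc (0 : ℝ) 1 zero_le_one (x - l) : ℝ)

theorem continuous_interpolate (c : ℕ → ℝ) (m : ℕ) : Continuous (interpolate c m) := by
  unfold interpolate
  fun_prop

theorem monotone_interpolate {c : ℕ → ℝ} {m : ℕ} (hc : ∀ l < m, c l ≤ c (l + 1)) :
    Monotone (interpolate c m) := fun x y hxy => by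
  unfold interpolate
  gcongr with l hl
  · exact sub_nonneg.2 (hc l (Finset.mem_range.1 hl))
  · exact Set.monotone_projIcc _ (sub_le_sub_right hxy _)

theorem interpolate_natCast (c : ℕ → ℝ) (m k : ℕ) : interpolate c m k = c (min k m) := by
  induction m with
  | zero => simp [interpolate]
  | succ m ih =>
    rw [interpolate, Finset.sum_range_succ, ← add_assoc, ← interpolate, ih]
    rcases le_or_gt k m with h | h
    · rw [Set.projIcc_of_le_left _ (by simpa using h), min_eq_left h,
        min_eq_left (h.trans m.le_succ)]
      simp
    · rw [Set.projIcc_of_right_le _ (by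
        have : (m : ℝ) + 1 ≤ k := by exact_mod_cast h
        linarith),
        min_eq_right h.le, min_eq_right h]
      simp

theorem exists_isReparam_interpolate {c : ℕ → I} {m : ℕ} (hc : IsSubdivision c m) :
    ∃ α, IsReparam α ∧ ∀ l < m, ∀ r : I, (l : ℝ) ≤ m * r → (m : ℝ) * r ≤ l + 1 →
      c l ≤ α r ∧ α r ≤ c (l + 1) := by
  have hFm : Monotone (interpolate (fun l => (c l : ℝ)) m) :=
    monotone_interpolate fun l hl => hc.le_succ l hl
  have hFc := continuous_interpolate (fun l => (c l : ℝ)) m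
  have hFl : ∀ l ≤ m, Set.projIcc 0 1 zero_le_one (interpolate (fun l => (c l : ℝ)) m l) = c l :=
    fun l hl => by rw [interpolate_natCast, min_eq_left hl, Set.projIcc_val]
  generalize interpolate (fun l => (c l : ℝ)) m = F at hFm hFc hFl
  refine ⟨fun r => Set.projIcc 0 1 zero_le_one (F (m * r)), .of_monotone (by fun_prop) ?_ ?_ ?_, ?_⟩
  · exact fun r r' h => Set.monotone_projIcc _ (hFm (by gcongr))
  · simpa [hc.map_zero] using hFl 0 m.zero_le
  · simpa [hc.map_last] using hFl m le_rfl
  · intro l hl r h1 h2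
    rw [← hFl l hl.le, ← hFl (l + 1) hl]
    exact ⟨Set.monotone_projIcc _ (hFm h1), Set.monotone_projIcc _ (hFm (by simpa using h2))⟩

theorem exists_nat_le_mul_le {m : ℕ} (hm : 0 < m) (r : I) :
    ∃ l < m, (l : ℝ) ≤ m * r ∧ (m : ℝ) * r ≤ l + 1 := by
  have h0 : (0 : ℝ) ≤ m * r := mul_nonneg m.cast_nonneg r.2.1
  rcases r.2.2.lt_or_eq with h | h
  · refine ⟨⌊(m : ℝ) * r⌋₊, ?_, Nat.floor_le h0, (Nat.lt_floor_add_one _).le⟩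
    refine (Nat.floor_lt h0).2 ?_
    have : (0 : ℝ) < m := by exact_mod_cast hm
    nlinarith
  · refine ⟨m - 1, by omega, ?_, ?_⟩ <;> rw [h, Nat.cast_sub hm] <;> simp

def DeviatesAtMost (f : I → X) (s : ℕ → I) (p : ℕ) (η : ℝ) : Prop :=
  ∀ i < p, ∀ x : I, s i ≤ x → x ≤ s (i + 1) → dist (f x) (f (s i)) ≤ η

section Deviation

variable {f : I → X} {s : ℕ → I} {p : ℕ} {η : ℝ}

theorem DeviatesAtMost.dist_le (hdev : DeviatesAtMost f s p η) (hη : 0 ≤ η) {i j : ℕ}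
    (hj : j = i ∨ j = i + 1) (hjp : j ≤ p) {x : I} (h1 : s i ≤ x) (h2 : x ≤ s j) :
    dist (f x) (f (s i)) ≤ η := by
  rcases hj with rfl | rfl
  · rwa [le_antisymm h2 h1, dist_self]
  · exact hdev i hjp x h1 h2

theorem DeviatesAtMost.dist_le_of_section (hdev : DeviatesAtMost f s p η) (hη : 0 ≤ η)
    (hs : IsSubdivision s p) {α γ : I → I} (hα : Monotone α) (hγ : ∀ y, α (γ y) = y)
    {i : ℕ} (hi : i ≤ p) {r : I} (h1 : γ (s i) ≤ r) (h2 : i < p → r ≤ γ (s (i + 1))) :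
    dist (f (α r)) (f (s i)) ≤ η := by
  have h1' : s i ≤ α r := hγ (s i) ▸ hα h1
  rcases hi.lt_or_eq with hi | rfl
  · exact hdev.dist_le hη (Or.inr rfl) hi h1' (hγ (s (i + 1)) ▸ hα (h2 hi))
  · exact hdev.dist_le hη (Or.inl rfl) le_rfl h1' (hs.map_last ▸ le_one')

end Deviation

section Approximation

variable {f g : I → X} {s t : ℕ → I} {p q : ℕ} {η : ℝ}

theorem frechetDist_le_of_isCoupling (hs : IsSubdivision s p) (ht : IsSubdivision t q)
    (hf : DeviatesAtMost f s p η) (hg : DeviatesAtMost g t q η) (hη : 0 ≤ η) {m : ℕ}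
    {a b : ℕ → ℕ} (hab : IsCoupling p q m a b) {c : ℝ}
    (hc : ∀ l ≤ m, dist (f (s (a l))) (g (t (b l))) ≤ c) : frechetDist f g ≤ c + 2 * η := by
  have hsa := hab.isSubdivision_comp_fst hs
  obtain ⟨α, hα, hαa⟩ := exists_isReparam_interpolate hsa
  obtain ⟨β, hβ, hβb⟩ := exists_isReparam_interpolate (hab.symm.isSubdivision_comp_fst ht)
  refine frechetDist_le hα hβ fun r => ?_
  obtain ⟨l, hl, hlr, hrl⟩ := exists_nat_le_mul_le hsa.pos r
  obtain ⟨hα1, hα2⟩ := hαa l hl r hlr hrl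
  obtain ⟨hβ1, hβ2⟩ := hβb l hl r hlr hrl
  have hfα := hf.dist_le hη (hab.2.2.2.2.1 l hl) (hab.fst_le hl) hα1 hα2
  have hgβ := hg.dist_le hη (hab.2.2.2.2.2 l hl) (hab.symm.fst_le hl) hβ1 hβ2
  calc dist (f (α r)) (g (β r))
      ≤ dist (f (α r)) (f (s (a l))) + dist (f (s (a l))) (g (t (b l)))
        + dist (g (t (b l))) (g (β r)) := dist_triangle4 _ _ _ _
    _ ≤ η + c + η := by
      rw [dist_comm (g _)]
      linarith [hc l hl.le]
    _ = c + 2 * η := by ring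

theorem discreteFrechet_le_of_isReparam (hs : IsSubdivision s p) (ht : IsSubdivision t q)
    (hf : DeviatesAtMost f s p η) (hg : DeviatesAtMost g t q η) (hη : 0 ≤ η)
    (hfc : Continuous f) (hgc : Continuous g) {α β : I → I} (hα : IsReparam α)
    (hβ : IsReparam β) :
    discreteFrechet p q (fun i => f (s i)) (fun j => g (t j)) ≤
      (⨆ r, dist (f (α r)) (g (β r))) + 2 * η := by
  obtain ⟨γ, hγ, hγ0, hαγ⟩ := hα.exists_monotone_section
  obtain ⟨δ, hδ, hδ0, hβδ⟩ := hβ.exists_monotone_section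
  obtain ⟨a, b, hab, hmerge⟩ :=
    exists_isCoupling_merge (R := fun i => γ (s i)) (P := fun j => δ (t j))
    (fun i hi => hγ (hs.le_succ i hi)) (fun j hj => hδ (ht.le_succ j hj))
    (by simp [hs.map_zero, ht.map_zero, hγ0, hδ0])
  have hbdd : BddAbove (Set.range fun r => dist (f (α r)) (g (β r))) :=
    (isCompact_range ((hfc.comp hα.1).dist (hgc.comp hβ.1))).bddAbove
  refine discreteFrechet_le hab fun l hl => ?_
  obtain ⟨hra, hrb⟩ := hmerge l hl
  set r := max (γ (s (a l))) (δ (t (b l)))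
  have hfα : dist (f (α r)) (f (s (a l))) ≤ η :=
    hf.dist_le_of_section hη hs hα.2.1 hαγ (hab.fst_le hl) (le_max_left _ _) hra
  have hgβ : dist (g (β r)) (g (t (b l))) ≤ η :=
    hg.dist_le_of_section hη ht hβ.2.1 hβδ (hab.symm.fst_le hl) (le_max_right _ _) hrb
  calc dist (f (s (a l))) (g (t (b l)))
      ≤ dist (f (s (a l))) (f (α r)) + dist (f (α r)) (g (β r))
        + dist (g (β r)) (g (t (b l))) := dist_triangle4 _ _ _ _
    _ ≤ η + (⨆ r, dist (f (α r)) (g (β r))) + η := by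
      rw [dist_comm (f _)]
      linarith [le_ciSup hbdd r]
    _ = (⨆ r, dist (f (α r)) (g (β r))) + 2 * η := by ring

theorem frechetDist_le_discreteFrechet_add (hs : IsSubdivision s p) (ht : IsSubdivision t q)
    (hf : DeviatesAtMost f s p η) (hg : DeviatesAtMost g t q η) (hη : 0 ≤ η) :
    frechetDist f g ≤ discreteFrechet p q (fun i => f (s i)) (fun j => g (t j)) + 2 * η := by
  refine sub_le_iff_le_add.1 (le_discreteFrechet fun m a b hab => sub_le_iff_le_add.2 ?_)
  exact frechetDist_le_of_isCoupling hs ht hf hg hη hab fun l hl =>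
    Finset.le_sup' (fun l => dist (f (s (a l))) (g (t (b l))))
      (Finset.mem_range.2 (Nat.lt_succ_of_le hl))

theorem discreteFrechet_le_frechetDist_add (hs : IsSubdivision s p) (ht : IsSubdivision t q)
    (hf : DeviatesAtMost f s p η) (hg : DeviatesAtMost g t q η) (hη : 0 ≤ η)
    (hfc : Continuous f) (hgc : Continuous g) :
    discreteFrechet p q (fun i => f (s i)) (fun j => g (t j)) ≤ frechetDist f g + 2 * η := by
  refine sub_le_iff_le_add.1 (le_frechetDist fun α β hα hβ => sub_le_iff_le_add.2 ?_)
  exact discreteFrechet_le_of_isReparam hs ht hf hg hη hfc hgc hα hβ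

end Approximation

end

/-- if the subdivisions have deviation at most `εB/2`, where `0 < B` is a lower
bound on the Fréchet distance, then the discrete Fréchet distance of the vertex sequences is
an `ε`-approximation of the continuous Fréchet distance. -/
theorem discreteFrechet_approx
    {X : Type*} [MetricSpace X] (f g : I → X) (hf : Continuous f) (hg : Continuous g)
    (ε : ℝ) (hε : 0 < ε) (B : ℝ) (hB : 0 < B) (hBle : B ≤ frechetDist f g)
    (p q : ℕ) (s t : ℕ → I)
    (hs0 : s 0 = 0) (hsp : s p = 1) (hsmono : ∀ i < p, s i ≤ s (i + 1))
    (ht0 : t 0 = 0) (htq : t q = 1) (htmono : ∀ j < q, t j ≤ t (j + 1))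
    (hdevf : ∀ i < p, ∀ x : I, s i ≤ x → x ≤ s (i + 1) →
      dist (f x) (f (s i)) ≤ ε * B / 2 ∧ dist (f x) (f (s (i + 1))) ≤ ε * B / 2)
    (hdevg : ∀ j < q, ∀ x : I, t j ≤ x → x ≤ t (j + 1) →
      dist (g x) (g (t j)) ≤ ε * B / 2 ∧ dist (g x) (g (t (j + 1))) ≤ ε * B / 2) :
    (1 - ε) * frechetDist f g ≤
        discreteFrechet p q (fun i => f (s i)) (fun j => g (t j)) ∧
      discreteFrechet p q (fun i => f (s i)) (fun j => g (t j)) ≤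
        (1 + ε) * frechetDist f g := by
  have hs : IsSubdivision s p := ⟨hs0, hsp, hsmono⟩
  have ht : IsSubdivision t q := ⟨ht0, htq, htmono⟩
  have hdf : DeviatesAtMost f s p (ε * B / 2) := fun i hi x h1 h2 => (hdevf i hi x h1 h2).1
  have hdg : DeviatesAtMost g t q (ε * B / 2) := fun j hj x h1 h2 => (hdevg j hj x h1 h2).1
  have hη : 0 ≤ ε * B / 2 := by positivity
  have lower := frechetDist_le_discreteFrechet_add hs ht hdf hdg hη
  have upper := discreteFrechet_le_frechetDist_add hs ht hdf hdg hη hf hg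
  have hεB : ε * B ≤ ε * frechetDist f g := mul_le_mul_of_nonneg_left hBle hε.le
  constructor <;> linarith
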